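/- The set of PTEL formulas T = {P_{≤1/k} α : k ∈ ℕ, k ≥ 1} ∪ {¬P_{=0} α} is inconsistent with respect to the axiomatic system Ax, where P_{≤s} α abbreviates P_{≥1−s} ¬α and P_{=0} α abbreviates P_{≥0} α ∧ P_{≤0} α. -/

import Mathlib

namespace PTEL

/-- Formulas of the probabilistic temporal epistemic logic PTEL with `m` agents
(agents are `Fin m`).  Propositional letters are `atom n` (`n : ℕ`) together with
the special letters `act a` (the letter `A_a`, "agent `a` is active"). -/
inductive Frm (m : ℕ) : Type where
  | atom   : ℕ → Frm m
  | act    : Fin m → Frm m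
  | neg    : Frm m → Frm m
  | and    : Frm m → Frm m → Frm m
  | next   : Frm m → Frm m
  | until  : Frm m → Frm m → Frm m
  | prev   : Frm m → Frm m
  | since  : Frm m → Frm m → Frm m
  | know   : Fin m → Frm m → Frm m
  | common : Frm m → Frm m
  | pge    : ℚ → Frm m → Frm m            -- P_{≥ s} α
  | page   : Fin m → ℚ → Frm m → Frm m    -- P_{a, ≥ s} α

namespace Frm

variable {m : ℕ}

/-- `α → β` defined classically as `¬(α ∧ ¬β)`. -/
def imp (α β : Frm m) : Frm m := Frm.neg (Frm.and α (Frm.neg β))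

/-- `α ∨ β` defined classically. -/
def orf (α β : Frm m) : Frm m := Frm.neg (Frm.and (Frm.neg α) (Frm.neg β))

/-- `α ↔ β`. -/
def ifff (α β : Frm m) : Frm m := Frm.and (imp α β) (imp β α)

/-- A fixed tautology `⊤`. -/
def verum : Frm m := imp (Frm.atom 0) (Frm.atom 0)

/-- `◯^n α`. -/
def nextPow : ℕ → Frm m → Frm m
  | 0, α => α
  | n + 1, α => Frm.next (nextPow n α)

/-- `●^n α`. -/
def prevPow : ℕ → Frm m → Frm m
  | 0, α => α
  | n + 1, α => Frm.prev (prevPow n α)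

/-- `⋀_{l=0}^{n-1} f l` (the empty conjunction is `⊤`). -/
def conjBelow (f : ℕ → Frm m) : ℕ → Frm m
  | 0 => verum
  | n + 1 => Frm.and (conjBelow f n) (f n)

/-- `G α = ⋀_{a ∈ Agents} K_a α` (everybody knows). -/
def ek (α : Frm m) : Frm m :=
  (List.finRange m).foldr (fun a acc => Frm.and (Frm.know a α) acc) verum

/-- `G^n α` where `G^0 α = α` and `G^{n+1} α = G (G^n α)`. -/
def ekPow : ℕ → Frm m → Frm m
  | 0, α => α
  | n + 1, α => ek (ekPow n α)

/-- `◇ α = (α → α) U α`. -/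
def sometime (α : Frm m) : Frm m := Frm.until (imp α α) α

/-- `□ α = ¬ ◇ ¬ α`. -/
def always (α : Frm m) : Frm m := Frm.neg (sometime (Frm.neg α))

/-- `P_{< s} α  =  ¬ P_{≥ s} α`. -/
def plt (s : ℚ) (α : Frm m) : Frm m := Frm.neg (Frm.pge s α)

/-- `P_{≤ s} α  =  P_{≥ 1-s} ¬α`. -/
def ple (s : ℚ) (α : Frm m) : Frm m := Frm.pge (1 - s) (Frm.neg α)

/-- `P_{a, < s} α  =  ¬ P_{a, ≥ s} α`. -/
def palt (a : Fin m) (s : ℚ) (α : Frm m) : Frm m := Frm.neg (Frm.page a s α)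

/-- `P_{a, ≤ s} α  =  P_{a, ≥ 1-s} ¬α`. -/
def pale (a : Fin m) (s : ℚ) (α : Frm m) : Frm m := Frm.page a (1 - s) (Frm.neg α)

end Frm

/-- The unary operators `K_a`, `◯`, `●` used in `k`-nested implications. -/
inductive Op (m : ℕ) : Type where
  | know : Fin m → Op m
  | next : Op m
  | prev : Op m

def Op.app {m : ℕ} : Op m → Frm m → Frm m
  | .know a, α => Frm.know a α
  | .next, α => Frm.next α
  | .prev, α => Frm.prev α

/-- The `k`-nested implication `Φ_{k,B,X}(τ)`.  Here `β0` is the innermost formula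
`β_0`, and `L = [(β_k, X_k), (β_{k-1}, X_{k-1}), …, (β_1, X_1)]` lists the remaining
formulas of `B` paired with the operators of `X`, from the outermost inwards:
`Φ_{0,(β_0),()}(τ) = β_0 → τ` and
`Φ_{k,B,X}(τ) = β_k → X_k Φ_{k-1,(β_0,…,β_{k-1}),(X_1,…,X_{k-1})}(τ)` for `k ≥ 1`. -/
def KNI {m : ℕ} (β0 : Frm m) : List (Frm m × Op m) → Frm m → Frm m
  | [], τ => Frm.imp β0 τ
  | p :: L, τ => Frm.imp p.1 (Op.app p.2 (KNI β0 L τ))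

/-- Instances of classical propositional tautologies: formulas true under every
Boolean valuation that respects `¬` and `∧`. -/
def IsTautology {m : ℕ} (φ : Frm m) : Prop :=
  ∀ v : Frm m → Bool,
    (∀ α, v (Frm.neg α) = !(v α)) →
    (∀ α β, v (Frm.and α β) = (v α && v β)) →
    v φ = true

/-- `q ∈ [0,1] ∩ ℚ`. -/
def InUnit (q : ℚ) : Prop := 0 ≤ q ∧ q ≤ 1

/-- Derivability in the axiomatic system `Ax` of PTEL.  Premises of the
necessitation rules must be theorems (derivable from `∅`); the rules
`ruleUntil`, `ruleSince`, `ruleCommon`, `ruleArch`, `ruleArchA` are the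
infinitary rules RU, RS, RC, RGA, RA formulated via `k`-nested implications. -/
inductive Deriv {m : ℕ} : Set (Frm m) → Frm m → Prop where
  -- I. propositional part
  | hyp {T : Set (Frm m)} {φ} (h : φ ∈ T) : Deriv T φ
  | tauto {T : Set (Frm m)} {φ} (h : IsTautology φ) : Deriv T φ
  | mp {T : Set (Frm m)} {φ ψ} (h1 : Deriv T (Frm.imp φ ψ)) (h2 : Deriv T φ) : Deriv T ψ
  -- II. temporal axioms and rules
  | axNextNeg {T : Set (Frm m)} (α) :
      Deriv T (Frm.ifff (Frm.neg (Frm.next α)) (Frm.next (Frm.neg α)))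
  | axNextImp {T : Set (Frm m)} (α β) :
      Deriv T (Frm.imp (Frm.next (Frm.imp α β)) (Frm.imp (Frm.next α) (Frm.next β)))
  | axUntilNext {T : Set (Frm m)} (α β) :
      Deriv T (Frm.ifff (Frm.until α β)
        (Frm.orf β (Frm.and α (Frm.next (Frm.until α β)))))
  | axUntilSometime {T : Set (Frm m)} (α β) :
      Deriv T (Frm.imp (Frm.until α β) (Frm.sometime β))
  | axPrevNeg {T : Set (Frm m)} (α) :
      Deriv T (Frm.imp (Frm.neg (Frm.prev (Frm.neg α))) (Frm.prev α))
  | axPrevImp {T : Set (Frm m)} (α β) :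
      Deriv T (Frm.imp (Frm.prev (Frm.imp α β)) (Frm.imp (Frm.prev α) (Frm.prev β)))
  | axPrevAnd {T : Set (Frm m)} (α β) :
      Deriv T (Frm.imp (Frm.and (Frm.prev α) (Frm.prev β)) (Frm.prev (Frm.and α β)))
  | axNextPrev {T : Set (Frm m)} (α) :
      Deriv T (Frm.ifff (Frm.next (Frm.prev α)) α)
  | axNextPrevC1 {T : Set (Frm m)} (α) :
      Deriv T (Frm.imp (Frm.next (Frm.prev α)) (Frm.prev (Frm.next α)))
  | axNextPrevC2 {T : Set (Frm m)} (α γ) :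
      Deriv T (Frm.imp (Frm.neg (Frm.prev (Frm.and γ (Frm.neg γ))))
        (Frm.ifff (Frm.next (Frm.prev α)) (Frm.prev (Frm.next α))))
  | axSincePrev {T : Set (Frm m)} (α β) :
      Deriv T (Frm.ifff (Frm.since α β)
        (Frm.orf β (Frm.and (Frm.neg (Frm.prev (Frm.and α (Frm.neg α))))
          (Frm.and α (Frm.prev (Frm.since α β))))))
  | axOncePrev {T : Set (Frm m)} (β) :
      Deriv T (Frm.since (Frm.imp (Frm.prev β) (Frm.prev β)) (Frm.prev β))
  | ruleNextNec {T : Set (Frm m)} {α} (h : Deriv ∅ α) : Deriv T (Frm.next α)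
  | rulePrevNec {T : Set (Frm m)} {α} (h : Deriv ∅ α) : Deriv T (Frm.prev α)
  | ruleUntil {T : Set (Frm m)} {β0 : Frm m} {L : List (Frm m × Op m)} {α β : Frm m}
      (h : ∀ i : ℕ, Deriv T (KNI β0 L (Frm.neg
        (Frm.and (Frm.conjBelow (fun l => Frm.nextPow l α) i) (Frm.nextPow i β))))) :
      Deriv T (KNI β0 L (Frm.neg (Frm.until α β)))
  | ruleSince {T : Set (Frm m)} {β0 : Frm m} {L : List (Frm m × Op m)} {α β : Frm m}
      (h : ∀ i : ℕ, Deriv T (KNI β0 L (Frm.neg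
        (Frm.and (Frm.conjBelow (fun l => Frm.prevPow l α) i)
          (Frm.and (Frm.conjBelow (fun l => Frm.neg (Frm.prevPow l (Frm.and α (Frm.neg α)))) (i + 1))
            (Frm.prevPow i β)))))) :
      Deriv T (KNI β0 L (Frm.neg (Frm.since α β)))
  -- III. epistemic axioms and rules
  | axKImp {T : Set (Frm m)} (a : Fin m) (α β) :
      Deriv T (Frm.imp (Frm.know a (Frm.imp α β)) (Frm.imp (Frm.know a α) (Frm.know a β)))
  | axKRefl {T : Set (Frm m)} (a : Fin m) (α) :
      Deriv T (Frm.imp (Frm.act a) (Frm.imp (Frm.know a α) α))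
  | axKAware {T : Set (Frm m)} (a : Fin m) :
      Deriv T (Frm.imp (Frm.act a) (Frm.know a (Frm.act a)))
  | axKDead {T : Set (Frm m)} (a : Fin m) (α) :
      Deriv T (Frm.imp (Frm.neg (Frm.act a)) (Frm.know a (Frm.and α (Frm.neg α))))
  | axKSymm {T : Set (Frm m)} (a : Fin m) (α) :
      Deriv T (Frm.imp (Frm.know a (Frm.neg α)) (Frm.know a (Frm.neg (Frm.know a α))))
  | axKTrans {T : Set (Frm m)} (a : Fin m) (α) :
      Deriv T (Frm.imp (Frm.know a α) (Frm.know a (Frm.know a α)))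
  | axCommon {T : Set (Frm m)} (α) (n : ℕ) :
      Deriv T (Frm.imp (Frm.common α) (Frm.ekPow n α))
  | ruleKNec {T : Set (Frm m)} (a : Fin m) {α} (h : Deriv ∅ α) : Deriv T (Frm.know a α)
  | ruleCommon {T : Set (Frm m)} {β0 : Frm m} {L : List (Frm m × Op m)} {α : Frm m}
      (h : ∀ i : ℕ, Deriv T (KNI β0 L (Frm.ekPow i α))) :
      Deriv T (KNI β0 L (Frm.common α))
  -- IV. probabilities on runs
  | axPge0 {T : Set (Frm m)} (α) : Deriv T (Frm.pge 0 α)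
  | axPleLt {T : Set (Frm m)} (α) {r t : ℚ} (hr : InUnit r) (ht : InUnit t) (h : r < t) :
      Deriv T (Frm.imp (Frm.ple r α) (Frm.plt t α))
  | axPltLe {T : Set (Frm m)} (α) {t : ℚ} (ht : InUnit t) :
      Deriv T (Frm.imp (Frm.plt t α) (Frm.ple t α))
  | axPAdd {T : Set (Frm m)} (α β) {r t : ℚ} (hr : InUnit r) (ht : InUnit t) :
      Deriv T (Frm.imp
        (Frm.and (Frm.pge r α) (Frm.and (Frm.pge t β) (Frm.pge 1 (Frm.neg (Frm.and α β)))))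
        (Frm.pge (min 1 (r + t)) (Frm.orf α β)))
  | axPAdd2 {T : Set (Frm m)} (α β) {r t : ℚ} (hr : InUnit r) (ht : InUnit t)
      (h : r + t ≤ 1) :
      Deriv T (Frm.imp (Frm.and (Frm.ple r α) (Frm.plt t α)) (Frm.plt (r + t) (Frm.orf α β)))
  | axPPrev {T : Set (Frm m)} (α) :
      Deriv T (Frm.pge 1 (Frm.prev (Frm.and α (Frm.neg α))))
  | rulePNec {T : Set (Frm m)} {α} (h : Deriv ∅ α) : Deriv T (Frm.pge 1 α)
  | ruleArch {T : Set (Frm m)} {β0 : Frm m} {L : List (Frm m × Op m)} {α : Frm m} {r : ℚ}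
      (hr0 : 0 < r) (hr1 : r ≤ 1)
      (h : ∀ i : ℕ, 1 / r ≤ (i : ℚ) → Deriv T (KNI β0 L (Frm.pge (r - 1 / (i : ℚ)) α))) :
      Deriv T (KNI β0 L (Frm.pge r α))
  -- V. probabilities on possible worlds
  | axPAge0 {T : Set (Frm m)} (a : Fin m) (α) : Deriv T (Frm.page a 0 α)
  | axPALeLt {T : Set (Frm m)} (a : Fin m) (α) {r t : ℚ} (hr : InUnit r) (ht : InUnit t)
      (h : r < t) :
      Deriv T (Frm.imp (Frm.pale a r α) (Frm.palt a t α))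
  | axPALtLe {T : Set (Frm m)} (a : Fin m) (α) {t : ℚ} (ht : InUnit t) :
      Deriv T (Frm.imp (Frm.palt a t α) (Frm.pale a t α))
  | axPAAdd {T : Set (Frm m)} (a : Fin m) (α β) {r t : ℚ} (hr : InUnit r) (ht : InUnit t) :
      Deriv T (Frm.imp
        (Frm.and (Frm.page a r α)
          (Frm.and (Frm.page a t β) (Frm.page a 1 (Frm.neg (Frm.and α β)))))
        (Frm.page a (min 1 (r + t)) (Frm.orf α β)))
  | axPAAdd2 {T : Set (Frm m)} (a : Fin m) (α β) {r t : ℚ} (hr : InUnit r) (ht : InUnit t)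
      (h : r + t ≤ 1) :
      Deriv T (Frm.imp (Frm.and (Frm.pale a r α) (Frm.palt a t α))
        (Frm.palt a (r + t) (Frm.orf α β)))
  | rulePANec {T : Set (Frm m)} (a : Fin m) {α} (h : Deriv ∅ α) : Deriv T (Frm.page a 1 α)
  | ruleArchA {T : Set (Frm m)} (a : Fin m) {β0 : Frm m} {L : List (Frm m × Op m)}
      {α : Frm m} {r : ℚ} (hr0 : 0 < r) (hr1 : r ≤ 1)
      (h : ∀ i : ℕ, 1 / r ≤ (i : ℚ) →
        Deriv T (KNI β0 L (Frm.page a (r - 1 / (i : ℚ)) α))) :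
      Deriv T (KNI β0 L (Frm.page a r α))

/-- A theory is inconsistent if it derives every formula. -/
def Inconsistent {m : ℕ} (T : Set (Frm m)) : Prop := ∀ φ : Frm m, Deriv T φ

def Consistent {m : ℕ} (T : Set (Frm m)) : Prop := ¬ Inconsistent T

def MaximalConsistent {m : ℕ} (T : Set (Frm m)) : Prop :=
  Consistent T ∧ ∀ S : Set (Frm m), T ⊂ S → ¬ Consistent S

/-! ### Semantics -/

/-- A run assigns to each moment the set of propositional letters true at it
(`Sum.inl n` is the letter `atom n`, `Sum.inr a` is the letter `A_a`). -/
abbrev Run (m : ℕ) : Type := ℕ → Set (ℕ ⊕ Fin m)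

/-- A finitely additive probability measure defined on an algebra of subsets of `X`. -/
structure FinAddProb (X : Type) where
  sets : Set (Set X)
  univ_mem : Set.univ ∈ sets
  compl_mem : ∀ A ∈ sets, Aᶜ ∈ sets
  union_mem : ∀ A ∈ sets, ∀ B ∈ sets, A ∪ B ∈ sets
  mu : Set X → ℝ
  mu_nonneg : ∀ A ∈ sets, 0 ≤ mu A
  mu_univ : mu Set.univ = 1
  mu_add : ∀ A ∈ sets, ∀ B ∈ sets, Disjoint A B → mu (A ∪ B) = mu A + mu B

/-- A finitely additive probability space on a nonempty subset (`carrier`) of `X`,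
with an algebra of subsets of the carrier. -/
structure SubFinAddProb (X : Type) where
  carrier : Set X
  carrier_nonempty : carrier.Nonempty
  sets : Set (Set X)
  sets_sub : ∀ A ∈ sets, A ⊆ carrier
  carrier_mem : carrier ∈ sets
  compl_mem : ∀ A ∈ sets, carrier \ A ∈ sets
  union_mem : ∀ A ∈ sets, ∀ B ∈ sets, A ∪ B ∈ sets
  mu : Set X → ℝ
  mu_nonneg : ∀ A ∈ sets, 0 ≤ mu A
  mu_carrier : mu carrier = 1
  mu_add : ∀ A ∈ sets, ∀ B ∈ sets, Disjoint A B → mu (A ∪ B) = mu A + mu B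

/-- A PTEL Kripke model. -/
structure Model (m : ℕ) where
  runs : Set (Run m)
  runs_nonempty : runs.Nonempty
  /-- epistemic accessibility relations on possible worlds (pairs run/time) -/
  acc : Fin m → (↥runs × ℕ) → (↥runs × ℕ) → Prop
  acc_symm : ∀ a w w', acc a w w' → acc a w' w
  acc_trans : ∀ a w w' w'', acc a w w' → acc a w' w'' → acc a w w''
  /-- agent `a` is inactive at `w` iff no world is accessible from `w` -/
  inactive_iff : ∀ (a : Fin m) (w : ↥runs × ℕ),
    Sum.inr a ∉ w.1.1 w.2 ↔ ∀ w', ¬ acc a w w'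
  /-- accessibility is reflexive at worlds where the agent is active -/
  acc_refl : ∀ (a : Fin m) (w : ↥runs × ℕ), Sum.inr a ∈ w.1.1 w.2 → acc a w w
  /-- the probability on runs associated to each possible world -/
  runProb : (↥runs × ℕ) → FinAddProb ↥runs
  /-- the agents' probability spaces on possible worlds -/
  agentProb : Fin m → (↥runs × ℕ) → SubFinAddProb (↥runs × ℕ)

abbrev Model.World {m : ℕ} (M : Model m) : Type := ↥M.runs × ℕ

/-- Satisfaction of a formula at a possible world of a model.  Common knowledge is
interpreted via reachability (the equivalent formulation of `(r,n) ⊨ C β`). -/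
def Sat {m : ℕ} (M : Model m) : Frm m → M.World → Prop
  | .atom n, w => Sum.inl n ∈ w.1.1 w.2
  | .act a, w => Sum.inr a ∈ w.1.1 w.2
  | .neg α, w => ¬ Sat M α w
  | .and α β, w => Sat M α w ∧ Sat M β w
  | .next α, w => Sat M α (w.1, w.2 + 1)
  | .until α β, w => ∃ j, w.2 ≤ j ∧ Sat M β (w.1, j) ∧
      ∀ k, w.2 ≤ k → k < j → Sat M α (w.1, k)
  | .prev α, w => w.2 = 0 ∨ ∃ n, w.2 = n + 1 ∧ Sat M α (w.1, n)
  | .since α β, w => ∃ j, j ≤ w.2 ∧ Sat M β (w.1, j) ∧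
      ∀ k, j < k → k ≤ w.2 → Sat M α (w.1, k)
  | .know a α, w => ∀ w', M.acc a w w' → Sat M α w'
  | .common α, w => ∀ w', Relation.ReflTransGen (fun u v => ∃ a, M.acc a u v) w w' →
      Sat M α w'
  | .pge s α, w => (s : ℝ) ≤ (M.runProb w).mu {r : ↥M.runs | Sat M α (r, 0)}
  | .page a s α, w => (s : ℝ) ≤ (M.agentProb a w).mu
      {w' : M.World | w' ∈ (M.agentProb a w).carrier ∧ Sat M α w'}

/-- A model is measurable if all definable sets of runs / of possible worlds are
measurable. -/
def Model.Measurable {m : ℕ} (M : Model m) : Prop :=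
  ∀ (β : Frm m) (w : M.World),
    {r : ↥M.runs | Sat M β (r, 0)} ∈ (M.runProb w).sets ∧
    ∀ a : Fin m,
      {w' : M.World | w' ∈ (M.agentProb a w).carrier ∧ Sat M β w'} ∈ (M.agentProb a w).sets

/-- A set of formulas is satisfiable if it holds at a possible world of some
measurable model. -/
def SatisfiableSet {m : ℕ} (T : Set (Frm m)) : Prop :=
  ∃ M : Model m, M.Measurable ∧ ∃ w : M.World, ∀ φ ∈ T, Sat M φ w

end PTEL

/-! The hypotheses `P_{≥ 1 - 1/k} ¬α` for `k ≥ 1` are exactly the premises of the Archimedean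
rule RGA for `P_{≥ 1} ¬α = P_{≤ 0} α`. Together with axiom AGP1 (`P_{≥ 0} α`) they derive
`P_{= 0} α`, which the theory also refutes. -/

namespace PTEL

variable {m : ℕ} {T : Set (Frm m)}

lemma isTautology_verum : IsTautology (Frm.verum : Frm m) := by
  intro v hn ha
  simp [Frm.verum, Frm.imp, hn, ha]

lemma isTautology_imp_imp_self (φ ψ : Frm m) : IsTautology (Frm.imp φ (Frm.imp ψ φ)) := by
  intro v hn ha
  simp only [Frm.imp, hn, ha]
  cases v φ <;> cases v ψ <;> rfl

lemma isTautology_imp_imp_and (φ ψ : Frm m) :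
    IsTautology (Frm.imp φ (Frm.imp ψ (Frm.and φ ψ))) := by
  intro v hn ha
  simp only [Frm.imp, hn, ha]
  cases v φ <;> cases v ψ <;> rfl

lemma isTautology_imp_neg_imp (φ ψ : Frm m) :
    IsTautology (Frm.imp ψ (Frm.imp (Frm.neg ψ) φ)) := by
  intro v hn ha
  simp only [Frm.imp, hn, ha]
  cases v φ <;> cases v ψ <;> rfl

namespace Deriv

lemma imp_verum {φ : Frm m} (h : Deriv T φ) : Deriv T (Frm.imp Frm.verum φ) :=
  mp (tauto (isTautology_imp_imp_self φ Frm.verum)) h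

lemma of_imp_verum {φ : Frm m} (h : Deriv T (Frm.imp Frm.verum φ)) : Deriv T φ :=
  mp h (tauto isTautology_verum)

lemma and_intro {φ ψ : Frm m} (hφ : Deriv T φ) (hψ : Deriv T ψ) : Deriv T (Frm.and φ ψ) :=
  mp (mp (tauto (isTautology_imp_imp_and φ ψ)) hφ) hψ

/-- RGA without context: the `k`-nested implication `⊤ → P_{≥ r} α` has `k = 0`. -/
lemma pge_of_forall_pge_sub_inv {α : Frm m} {r : ℚ} (hr0 : 0 < r) (hr1 : r ≤ 1)
    (h : ∀ i : ℕ, 1 / r ≤ (i : ℚ) → Deriv T (Frm.pge (r - 1 / (i : ℚ)) α)) :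
    Deriv T (Frm.pge r α) :=
  of_imp_verum (ruleArch (β0 := Frm.verum) (L := []) hr0 hr1 fun i hi => imp_verum (h i hi))

lemma ple_zero_of_forall_ple_inv {α : Frm m}
    (h : ∀ k : ℕ, 1 ≤ k → Deriv T (Frm.ple (1 / (k : ℚ)) α)) : Deriv T (Frm.ple 0 α) := by
  rw [Frm.ple, sub_zero]
  exact pge_of_forall_pge_sub_inv one_pos le_rfl fun i hi =>
    h i (by exact_mod_cast (div_one (1 : ℚ) ▸ hi))

end Deriv

lemma inconsistent_of_deriv_of_neg_mem {ψ : Frm m} (h : Deriv T ψ) (hneg : Frm.neg ψ ∈ T) :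
    Inconsistent T := fun φ =>
  Deriv.mp (Deriv.mp (Deriv.tauto (isTautology_imp_neg_imp φ ψ)) h) (Deriv.hyp hneg)

/-- The set `{P_{≤ 1/k} α : k ≥ 1} ∪ {¬ P_{=0} α}` is inconsistent w.r.t. `Ax`,
where `P_{≤ s} α = P_{≥ 1-s} ¬α` and `P_{=0} α = P_{≥0} α ∧ P_{≤0} α`. -/
theorem prob_noncompact_set_inconsistent {m : ℕ} (α : Frm m) :
    Inconsistent
      ({φ : Frm m | ∃ k : ℕ, 1 ≤ k ∧ φ = Frm.ple (1 / (k : ℚ)) α} ∪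
        {Frm.neg (Frm.and (Frm.pge 0 α) (Frm.ple 0 α))}) := by
  refine inconsistent_of_deriv_of_neg_mem
    ((Deriv.axPge0 α).and_intro (Deriv.ple_zero_of_forall_ple_inv fun k hk => ?_)) (Or.inr rfl)
  exact Deriv.hyp (Or.inl ⟨k, hk, rfl⟩)
end PTEL
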